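/- Let ℓ ≥ 2, and let X, T : ℝ² → Matrix (Fin ℓ) (Fin ℓ) ℝ and V : ℝ² → (Fin ℓ → ℝ) be smooth (C^∞) functions of (x,t) with V(x,t) last ≠ 0 for all (x,t) (where last denotes the last index ℓ−1 of Fin ℓ), satisfying the linear system ∂_x V = X.mulVec V and ∂_t V = T.mulVec V. Define ρ s := (V s)/(V last) for s ranging over the first ℓ−1 indices. Then the conservation-law identity ∂_t ( ∑_s X last s · ρ s + X last last ) = ∂_x ( ∑_s T last s · ρ s + T last last ) holds at every point of ℝ², where the sums run over the first ℓ−1 indices s. -/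

import Mathlib

/-- Partial derivative in the first variable `x`. -/
noncomputable def px (f : ℝ → ℝ → ℝ) : ℝ → ℝ → ℝ := fun x t => deriv (fun y => f y t) x

/-- Partial derivative in the second variable `t`. -/
noncomputable def pt (f : ℝ → ℝ → ℝ) : ℝ → ℝ → ℝ := fun x t => deriv (fun s => f x s) t

/-!
Along solutions of the linear system, the last row of `X *ᵥ V` divided by `v^ℓ` is exactly
the Riccati expression `∑_s X_{ℓs} ρ^s + X_{ℓℓ}`; hence the two components of `μ` are
`∂_x v^ℓ / v^ℓ` and `∂_t v^ℓ / v^ℓ`, the partial derivatives of `log |v^ℓ|`. Closedness of `μ`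
is then the symmetry of the mixed second derivatives of the smooth function `v^ℓ`.
-/

open Function

section PartialDerivatives

variable {f g : ℝ → ℝ → ℝ} {x t : ℝ}

theorem hasDerivAt_px (hf : DifferentiableAt ℝ (uncurry f) (x, t)) :
    HasDerivAt (fun y => f y t) (fderiv ℝ (uncurry f) (x, t) (1, 0)) x :=
  hf.hasFDerivAt.comp_hasDerivAt (l := uncurry f) x
    ((hasDerivAt_id x).prodMk (hasDerivAt_const x t))

theorem hasDerivAt_pt (hf : DifferentiableAt ℝ (uncurry f) (x, t)) :
    HasDerivAt (fun s => f x s) (fderiv ℝ (uncurry f) (x, t) (0, 1)) t :=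
  hf.hasFDerivAt.comp_hasDerivAt (l := uncurry f) t
    ((hasDerivAt_const t x).prodMk (hasDerivAt_id t))

theorem uncurry_px (hf : Differentiable ℝ (uncurry f)) :
    uncurry (px f) = fun p => fderiv ℝ (uncurry f) p (1, 0) :=
  funext fun p => (hasDerivAt_px (hf p)).deriv

theorem uncurry_pt (hf : Differentiable ℝ (uncurry f)) :
    uncurry (pt f) = fun p => fderiv ℝ (uncurry f) p (0, 1) :=
  funext fun p => (hasDerivAt_pt (hf p)).deriv

theorem contDiff_uncurry_px {n : WithTop ℕ∞} (hf : ContDiff ℝ (n + 1) (uncurry f)) :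
    ContDiff ℝ n (uncurry (px f)) := by
  rw [uncurry_px (hf.differentiable (by simp))]
  exact (hf.fderiv_right le_rfl).clm_apply contDiff_const

theorem contDiff_uncurry_pt {n : WithTop ℕ∞} (hf : ContDiff ℝ (n + 1) (uncurry f)) :
    ContDiff ℝ n (uncurry (pt f)) := by
  rw [uncurry_pt (hf.differentiable (by simp))]
  exact (hf.fderiv_right le_rfl).clm_apply contDiff_const

theorem pt_px_eq_px_pt (hf : ContDiff ℝ 2 (uncurry f)) :
    pt (px f) x t = px (pt f) x t := by
  have hdiff : Differentiable ℝ (uncurry f) := hf.differentiable (by norm_num)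
  have hdiff₂ : Differentiable ℝ (fderiv ℝ (uncurry f)) :=
    (hf.fderiv_right (m := 1) (by norm_num)).differentiable one_ne_zero
  have fderiv_apply_eq : ∀ v w : ℝ × ℝ, fderiv ℝ (fun p => fderiv ℝ (uncurry f) p v) (x, t) w
      = fderiv ℝ (fderiv ℝ (uncurry f)) (x, t) w v := fun v w => by
    rw [fderiv_clm_apply (hdiff₂ _) (differentiableAt_const v)]
    simp
  have hpx : pt (px f) x t = fderiv ℝ (uncurry (px f)) (x, t) (0, 1) :=
    (hasDerivAt_pt (((contDiff_uncurry_px (n := 1) hf).differentiable one_ne_zero) _)).deriv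
  have hpt : px (pt f) x t = fderiv ℝ (uncurry (pt f)) (x, t) (1, 0) :=
    (hasDerivAt_px (((contDiff_uncurry_pt (n := 1) hf).differentiable one_ne_zero) _)).deriv
  rw [hpx, hpt, uncurry_px hdiff, uncurry_pt hdiff, fderiv_apply_eq, fderiv_apply_eq]
  exact (hf.contDiffAt.isSymmSndFDerivAt (by simp)) _ _

theorem pt_div (hf : DifferentiableAt ℝ (uncurry f) (x, t))
    (hg : DifferentiableAt ℝ (uncurry g) (x, t)) (hg0 : g x t ≠ 0) :
    pt (fun x t => f x t / g x t) x t = (pt f x t * g x t - f x t * pt g x t) / g x t ^ 2 :=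
  ((hasDerivAt_pt hf).div (hasDerivAt_pt hg) hg0).deriv.trans <| by
    rw [(hasDerivAt_pt hf).deriv.symm, (hasDerivAt_pt hg).deriv.symm]; rfl

theorem px_div (hf : DifferentiableAt ℝ (uncurry f) (x, t))
    (hg : DifferentiableAt ℝ (uncurry g) (x, t)) (hg0 : g x t ≠ 0) :
    px (fun x t => f x t / g x t) x t = (px f x t * g x t - f x t * px g x t) / g x t ^ 2 :=
  ((hasDerivAt_px hf).div (hasDerivAt_px hg) hg0).deriv.trans <| by
    rw [(hasDerivAt_px hf).deriv.symm, (hasDerivAt_px hg).deriv.symm]; rfl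

theorem pt_px_div_self_eq_px_pt_div_self (hf : ContDiff ℝ 2 (uncurry f)) (hf0 : f x t ≠ 0) :
    pt (fun x t => px f x t / f x t) x t = px (fun x t => pt f x t / f x t) x t := by
  have hdf := hf.differentiable two_ne_zero (x, t)
  rw [pt_div ((contDiff_uncurry_px (n := 1) hf).differentiable one_ne_zero _) hdf hf0,
    px_div ((contDiff_uncurry_pt (n := 1) hf).differentiable one_ne_zero _) hdf hf0,
    pt_px_eq_px_pt hf]
  ring

end PartialDerivatives

theorem Matrix.sum_mul_div_last_add {K : Type*} [Field K] {m : ℕ}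
    (A : Matrix (Fin (m + 1)) (Fin (m + 1)) K) (v : Fin (m + 1) → K) (hv : v (Fin.last m) ≠ 0)
    (i : Fin (m + 1)) :
    ∑ s : Fin m, A i s.castSucc * (v s.castSucc / v (Fin.last m)) + A i (Fin.last m)
      = A.mulVec v i / v (Fin.last m) := by
  rw [Matrix.mulVec, dotProduct, Fin.sum_univ_castSucc, add_div, Finset.sum_div,
    mul_div_cancel_right₀ _ hv]
  simp only [mul_div_assoc]

theorem riccati_covering_conservation_law_general (n : ℕ)
    (X T : ℝ → ℝ → Matrix (Fin (n + 2)) (Fin (n + 2)) ℝ)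
    (V : ℝ → ℝ → (Fin (n + 2) → ℝ))
    (hV : ∀ i, ContDiff ℝ (⊤ : ℕ∞) (Function.uncurry fun x t => V x t i))
    (hnz : ∀ x t, V x t (Fin.last (n + 1)) ≠ 0)
    (hVx : ∀ x t i, px (fun x t => V x t i) x t = (X x t).mulVec (V x t) i)
    (hVt : ∀ x t i, pt (fun x t => V x t i) x t = (T x t).mulVec (V x t) i) :
    ∀ x t,
      pt (fun x t =>
            (∑ s : Fin (n + 1),
              X x t (Fin.last (n + 1)) s.castSucc
                * (V x t s.castSucc / V x t (Fin.last (n + 1))))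
            + X x t (Fin.last (n + 1)) (Fin.last (n + 1))) x t
        = px (fun x t =>
            (∑ s : Fin (n + 1),
              T x t (Fin.last (n + 1)) s.castSucc
                * (V x t s.castSucc / V x t (Fin.last (n + 1))))
            + T x t (Fin.last (n + 1)) (Fin.last (n + 1))) x t := by
  intro x t
  have hρX : ∀ a b, ∑ s : Fin (n + 1), X a b (Fin.last (n + 1)) s.castSucc
        * (V a b s.castSucc / V a b (Fin.last (n + 1)))
        + X a b (Fin.last (n + 1)) (Fin.last (n + 1))
      = px (fun x t => V x t (Fin.last (n + 1))) a b / V a b (Fin.last (n + 1)) := fun a b => by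
    rw [Matrix.sum_mul_div_last_add _ _ (hnz a b), hVx]
  have hρT : ∀ a b, ∑ s : Fin (n + 1), T a b (Fin.last (n + 1)) s.castSucc
        * (V a b s.castSucc / V a b (Fin.last (n + 1)))
        + T a b (Fin.last (n + 1)) (Fin.last (n + 1))
      = pt (fun x t => V x t (Fin.last (n + 1))) a b / V a b (Fin.last (n + 1)) := fun a b => by
    rw [Matrix.sum_mul_div_last_add _ _ (hnz a b), hVt]
  simp only [hρX, hρT]
  exact pt_px_div_self_eq_px_pt_div_self ((hV _).of_le (WithTop.coe_le_coe.mpr le_top)) (hnz x t)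

/-- the nonlocal conservation law attached to the Riccati covering of
an `ℓ×ℓ` zero-curvature representation:
`∂_t (∑_s X_{ℓs}ρ^s + X_{ℓℓ}) = ∂_x (∑_s T_{ℓs}ρ^s + T_{ℓℓ})`, where `ρ^s = v^s/v^ℓ`
(here `ℓ = n + 2 ≥ 2` and the last index is `Fin.last (n+1)`). -/
theorem riccati_covering_conservation_law (n : ℕ)
    (X T : ℝ → ℝ → Matrix (Fin (n + 2)) (Fin (n + 2)) ℝ)
    (V : ℝ → ℝ → (Fin (n + 2) → ℝ))
    (hX : ∀ i j, ContDiff ℝ (⊤ : ℕ∞) (Function.uncurry fun x t => X x t i j))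
    (hT : ∀ i j, ContDiff ℝ (⊤ : ℕ∞) (Function.uncurry fun x t => T x t i j))
    (hV : ∀ i, ContDiff ℝ (⊤ : ℕ∞) (Function.uncurry fun x t => V x t i))
    (hnz : ∀ x t, V x t (Fin.last (n + 1)) ≠ 0)
    (hVx : ∀ x t i, px (fun x t => V x t i) x t = (X x t).mulVec (V x t) i)
    (hVt : ∀ x t i, pt (fun x t => V x t i) x t = (T x t).mulVec (V x t) i) :
    ∀ x t,
      pt (fun x t =>
            (∑ s : Fin (n + 1),
              X x t (Fin.last (n + 1)) s.castSucc
                * (V x t s.castSucc / V x t (Fin.last (n + 1))))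
            + X x t (Fin.last (n + 1)) (Fin.last (n + 1))) x t
        = px (fun x t =>
            (∑ s : Fin (n + 1),
              T x t (Fin.last (n + 1)) s.castSucc
                * (V x t s.castSucc / V x t (Fin.last (n + 1))))
            + T x t (Fin.last (n + 1)) (Fin.last (n + 1))) x t :=
  riccati_covering_conservation_law_general n X T V hV hnz hVx hVt
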